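/- arXiv:1804.03274 — 3 statements merged into one kernel-verified Lean document; each statement's English description precedes it below -/
import Mathlib

section
/- There exists a constant C₀ > 0 such that for every integer k ≥ 1 and every real y, |e^{−y²/2} H_k(y)| ≤ C₀ √(k!) · k^{−1/12} · e^{−y²/4}, where H_k is the k-th probabilists' Hermite polynomial. -/
open Real Filter

noncomputable section

/-- the standard normal density φ(x) = (2π)^{-1/2} exp(−x²/2) -/
def stdNormalPDF (x : ℝ) : ℝ := (Real.sqrt (2 * π))⁻¹ * Real.exp (-x ^ 2 / 2)

/-- the k-th probabilists' Hermite polynomial, evaluated at a real number;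
`Polynomial.hermite` satisfies `H_k(x) = (−1)^k φ(x)⁻¹ (d^k/dx^k) φ(x)`. -/
def He (k : ℕ) (y : ℝ) : ℝ := Polynomial.aeval y (Polynomial.hermite k)

open Polynomial Set Topology
open scoped Nat

/-!
The Hermite function `w = e^{-x²/4} He_k` solves Weber's equation `w'' + q w = 0` with
`q x = s⁶ - x²/4`, `s⁶ = k + 1/2`. As `w²` is even, take `x ≥ 0` and cut at `Y = 2 √(s⁶ - s²)`,
where `q = s²`, and at `Y + 4 / s`.

* On `[0, Y]` the adiabatic invariant `V = (w'² + q w²) / √q` satisfies `V' = g (w w')'` for an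
  increasing weight `0 ≤ g ≤ 1/2`. Integrating by parts against the maximum `M` of `V` gives
  `M ≤ V 0 + M / 2`, so `w² ≤ V / √q ≤ 2 V 0 / s`.
* On `[Y, Y + 4 / s]` we have `|q| ≤ (3 s)²`, and Grönwall lets `w² + (w' / 3 s)²` grow by at most
  `e^{6 s · 4 / s} = e^{24}`.
* Beyond, `q ≤ 0`, so `w²` is convex; since it tends to `0`, it is decreasing.

Finally the values `He_k 0` give `w' 0 ² + s⁶ w 0 ² ≤ 2 k! s³`, so `w² ≲ k! / s ≤ k! k^{-1/6}`.
-/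

lemma ConvexOn.le_left_of_tendsto_atTop {f : ℝ → ℝ} {a x : ℝ} (hf : ConvexOn ℝ (Ici a) f)
    (hlim : Tendsto f atTop (𝓝 0)) (ha : 0 ≤ f a) (hx : a ≤ x) : f x ≤ f a := by
  have hmax : ∀ᶠ t in atTop, f x ≤ max (f a) (f t) := eventually_atTop.2 ⟨x, fun t ht ↦
    hf.le_on_segment self_mem_Ici (hx.trans ht)
      (by rw [segment_eq_Icc (hx.trans ht)]; exact ⟨hx, ht⟩)⟩
  simpa [max_eq_left ha] using ge_of_tendsto (tendsto_const_nhds.max hlim) hmax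

namespace Polynomial

theorem derivative_hermite_succ (n : ℕ) :
    derivative (hermite (n + 1)) = ((n : ℤ[X]) + 1) * hermite n := by
  induction n with
  | zero => simp [hermite_zero]
  | succ n ih =>
    rw [hermite_succ (n + 1), derivative_sub, derivative_mul, derivative_X, one_mul, ih,
      derivative_mul, hermite_succ n]
    simp only [derivative_add, derivative_natCast, derivative_one, add_zero, zero_mul, zero_add]
    push_cast
    ring

theorem hermite_succ_succ (n : ℕ) :
    hermite (n + 2) = X * hermite (n + 1) - ((n : ℤ[X]) + 1) * hermite n := by
  rw [hermite_succ (n + 1), derivative_hermite_succ]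

theorem derivative_derivative_hermite (n : ℕ) :
    derivative (derivative (hermite n)) = X * derivative (hermite n) - (n : ℤ[X]) * hermite n := by
  have h := congrArg derivative (hermite_succ n)
  rw [derivative_hermite_succ, derivative_sub, derivative_mul, derivative_X, one_mul] at h
  linear_combination h

end Polynomial

lemma He_succ_succ (n : ℕ) (x : ℝ) : He (n + 2) x = x * He (n + 1) x - (n + 1) * He n x := by
  simp only [He, hermite_succ_succ, map_sub, map_mul, aeval_X, map_add, map_natCast, map_one]

lemma He_neg : ∀ (n : ℕ) (x : ℝ), He n (-x) = (-1) ^ n * He n x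
  | 0, x => by simp [He]
  | 1, x => by simp [He]
  | n + 2, x => by
    rw [He_succ_succ, He_succ_succ, He_neg n, He_neg (n + 1)]
    ring

lemma He_zero_mul_He_succ_zero (n : ℕ) : He n 0 * He (n + 1) 0 = 0 := by
  induction n with
  | zero => simp [He]
  | succ n ih =>
    rw [He_succ_succ]
    linear_combination (-(n : ℝ) - 1) * ih

lemma succ_mul_He_zero_pow_four_le : ∀ n : ℕ, (n + 1) * He n 0 ^ 4 ≤ 2 * (n ! : ℝ) ^ 2
  | 0 => by norm_num [He]
  | 1 => by norm_num [He]
  | n + 2 => by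
    have ih := succ_mul_He_zero_pow_four_le n
    rw [He_succ_succ, zero_mul, zero_sub, Nat.factorial_succ, Nat.factorial_succ]
    push_cast
    calc (n + 2 + 1 : ℝ) * (-((n + 1) * He n 0)) ^ 4
        = (n + 3) * (n + 1) ^ 3 * ((n + 1) * He n 0 ^ 4) := by ring
      _ ≤ (n + 3) * (n + 1) ^ 3 * (2 * (n ! : ℝ) ^ 2) := by gcongr
      _ = 2 * (n + 1) ^ 2 * (n ! : ℝ) ^ 2 * ((n + 3) * (n + 1)) := by ring
      _ ≤ 2 * (n + 1) ^ 2 * (n ! : ℝ) ^ 2 * (n + 2) ^ 2 := by gcongr; nlinarith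
      _ = 2 * ((n + 1 + 1) * ((n + 1) * n !)) ^ 2 := by ring

lemma hasDerivAt_He (n : ℕ) (x : ℝ) :
    HasDerivAt (He n) (aeval x (derivative (hermite n))) x :=
  (hermite n).hasDerivAt_aeval x

lemma hasDerivAt_aeval_derivative_hermite (n : ℕ) (x : ℝ) :
    HasDerivAt (fun x : ℝ ↦ aeval x (derivative (hermite n)))
      (x * aeval x (derivative (hermite n)) - n * He n x) x := by
  have := (derivative (hermite n)).hasDerivAt_aeval x
  rwa [derivative_derivative_hermite, map_sub, map_mul, map_mul, aeval_X, map_natCast] at this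

def weberPot (s x : ℝ) : ℝ := s ^ 6 - x ^ 2 / 4

structure IsWeberSolution (s : ℝ) (w v : ℝ → ℝ) : Prop where
  hasDerivAt_fst (x : ℝ) : HasDerivAt w (v x) x
  hasDerivAt_snd (x : ℝ) : HasDerivAt v (-(weberPot s x * w x)) x

def weberEnergy (s : ℝ) (w v : ℝ → ℝ) (x : ℝ) : ℝ := v x ^ 2 + weberPot s x * w x ^ 2

def adiabaticInvariant (s : ℝ) (w v : ℝ → ℝ) (x : ℝ) : ℝ :=
  weberEnergy s w v x / √(weberPot s x)

def adiabaticWeight (s x : ℝ) : ℝ := x / (4 * weberPot s x * √(weberPot s x))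

def weberEdge (s : ℝ) : ℝ := 2 * √(s ^ 6 - s ^ 2)

section WeberPot

variable {s : ℝ}

lemma hasDerivAt_weberPot (s x : ℝ) : HasDerivAt (weberPot s) (-(x / 2)) x := by
  refine (((hasDerivAt_pow 2 x).div_const 4).const_sub (s ^ 6)).congr_deriv ?_
  norm_num
  ring

lemma weberPot_le_weberPot {a b : ℝ} (ha : 0 ≤ a) (hab : a ≤ b) : weberPot s b ≤ weberPot s a := by
  unfold weberPot; nlinarith

lemma weberPot_weberEdge (hs : 1 ≤ s) : weberPot s (weberEdge s) = s ^ 2 := by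
  have : s ^ 2 ≤ s ^ 6 := pow_le_pow_right₀ hs (by norm_num)
  rw [weberPot, weberEdge, mul_pow, sq_sqrt (by linarith)]
  ring

lemma weberEdge_nonneg : 0 ≤ weberEdge s := by unfold weberEdge; positivity

lemma weberEdge_le (hs : 1 ≤ s) : weberEdge s ≤ 2 * s ^ 3 := by
  have : √(s ^ 6 - s ^ 2) ≤ √((s ^ 3) ^ 2) := sqrt_le_sqrt (by nlinarith)
  rw [sqrt_sq (by positivity)] at this
  unfold weberEdge; linarith

lemma sq_le_weberPot (hs : 1 ≤ s) {x : ℝ} (hx : x ∈ Icc 0 (weberEdge s)) :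
    s ^ 2 ≤ weberPot s x :=
  weberPot_weberEdge hs ▸ weberPot_le_weberPot hx.1 hx.2

lemma hasDerivAt_adiabaticWeight {x : ℝ} (hq : 0 < weberPot s x) :
    HasDerivAt (adiabaticWeight s)
      ((4 * weberPot s x + 3 * x ^ 2) / (16 * weberPot s x ^ 2 * √(weberPot s x))) x := by
  have hr : 0 < √(weberPot s x) := sqrt_pos.2 hq
  have hden : HasDerivAt (fun y ↦ 4 * weberPot s y * √(weberPot s y))
      (4 * -(x / 2) * √(weberPot s x) + 4 * weberPot s x * (-(x / 2) / (2 * √(weberPot s x)))) x :=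
    ((hasDerivAt_weberPot s x).const_mul 4).mul ((hasDerivAt_weberPot s x).sqrt hq.ne')
  refine ((hasDerivAt_id' x).div hden (mul_pos (mul_pos four_pos hq) hr).ne').congr_deriv ?_
  set r := √(weberPot s x)
  rw [← sq_sqrt hq.le]
  field_simp
  ring

lemma adiabaticWeight_le (hs : 1 ≤ s) {x : ℝ} (hx : x ∈ Icc 0 (weberEdge s)) :
    adiabaticWeight s x ≤ 1 / 2 := by
  have hq := sq_le_weberPot hs hx
  have hr : s ≤ √(weberPot s x) := by
    simpa [sqrt_sq (by linarith : 0 ≤ s)] using sqrt_le_sqrt hq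
  have hx' : x ≤ 2 * s ^ 3 := hx.2.trans (weberEdge_le hs)
  have hs3 : s ^ 3 ≤ weberPot s x * √(weberPot s x) :=
    calc s ^ 3 = s ^ 2 * s := by ring
      _ ≤ _ := mul_le_mul hq hr (by linarith) (by nlinarith)
  rw [adiabaticWeight, div_le_iff₀ (by nlinarith)]
  nlinarith

lemma abs_mul_le_adiabaticInvariant (w v : ℝ → ℝ) {x : ℝ} (hq : 0 < weberPot s x) :
    |w x * v x| ≤ adiabaticInvariant s w v x / 2 := by
  have hr : 0 < √(weberPot s x) := sqrt_pos.2 hq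
  rw [adiabaticInvariant, weberEnergy, abs_mul, div_div, le_div_iff₀ (by linarith)]
  nlinarith [sq_nonneg (√(weberPot s x) * |w x| - |v x|), sq_sqrt hq.le, sq_abs (w x),
    sq_abs (v x), abs_nonneg (w x), abs_nonneg (v x)]

lemma sq_le_adiabaticInvariant_div (w v : ℝ → ℝ) {x : ℝ} (hq : 0 < weberPot s x) :
    w x ^ 2 ≤ adiabaticInvariant s w v x / √(weberPot s x) := by
  have hr : 0 < √(weberPot s x) := sqrt_pos.2 hq
  rw [adiabaticInvariant, weberEnergy, div_div, le_div_iff₀ (mul_pos hr hr), mul_self_sqrt hq.le]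
  nlinarith [sq_nonneg (v x)]

lemma weberEdge_sq (hs : 1 ≤ s) : weberEdge s ^ 2 = 4 * (s ^ 6 - s ^ 2) := by
  have : s ^ 2 ≤ s ^ 6 := pow_le_pow_right₀ hs (by norm_num)
  rw [weberEdge, mul_pow, sq_sqrt (by linarith)]
  ring

lemma abs_weberPot_le {x : ℝ} (hs : 1 ≤ s) (hx : x ∈ Icc (weberEdge s) (weberEdge s + 4 / s)) :
    |weberPot s x| ≤ (3 * s) ^ 2 := by
  have hY := weberEdge_nonneg (s := s)
  have hupper : weberPot s x ≤ s ^ 2 :=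
    weberPot_weberEdge hs ▸ weberPot_le_weberPot hY hx.1
  have ht : 4 / s ≤ 4 := div_le_self (by norm_num) hs
  have hYt : weberEdge s * (4 / s) ≤ 8 * s ^ 2 := by
    rw [mul_div_assoc', div_le_iff₀ (by linarith)]
    nlinarith [weberEdge_le hs]
  have hx2 : x ^ 2 ≤ (weberEdge s + 4 / s) ^ 2 := pow_le_pow_left₀ (hY.trans hx.1) hx.2 2
  refine abs_le.2 ⟨?_, by nlinarith⟩
  rw [weberPot]
  nlinarith [weberEdge_sq hs, div_pos four_pos (by linarith : 0 < s)]

lemma weberPot_weberEdge_add_nonpos (hs : 21 / 20 ≤ s) :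
    weberPot s (weberEdge s + 4 / s) ≤ 0 := by
  have hs0 : 0 < s := by linarith
  have hs4 : 16 / 15 ≤ s ^ 4 :=
    le_trans (by norm_num) (pow_le_pow_left₀ (by norm_num) hs 4)
  have hY2 := weberEdge_sq (by linarith : 1 ≤ s)
  have hY : s ^ 3 / 2 ≤ weberEdge s := by
    nlinarith [weberEdge_nonneg (s := s), pow_pos hs0 3, pow_pos hs0 2]
  have hYs : s ^ 2 ≤ 2 * weberEdge s * (4 / s) / 4 := by
    rw [le_div_iff₀ four_pos, mul_div_assoc', le_div_iff₀ hs0]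
    nlinarith
  rw [weberPot]
  nlinarith [div_pos four_pos hs0]

lemma weberEnergy_zero_nonneg (s : ℝ) (w v : ℝ → ℝ) : 0 ≤ weberEnergy s w v 0 := by
  rw [weberEnergy, weberPot]
  norm_num
  positivity

lemma adiabaticInvariant_zero (w v : ℝ → ℝ) (hs : 0 ≤ s) :
    adiabaticInvariant s w v 0 = weberEnergy s w v 0 / s ^ 3 := by
  rw [adiabaticInvariant, weberPot, show s ^ 6 = (s ^ 3) ^ 2 by ring]
  norm_num [sqrt_sq (pow_nonneg hs 3)]

end WeberPot

namespace IsWeberSolution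

variable {s : ℝ} {w v : ℝ → ℝ} (h : IsWeberSolution s w v)
include h

lemma hasDerivAt_weberEnergy (x : ℝ) :
    HasDerivAt (weberEnergy s w v) (-(x / 2) * w x ^ 2) x := by
  refine (((h.hasDerivAt_snd x).pow 2).add
    ((hasDerivAt_weberPot s x).mul ((h.hasDerivAt_fst x).pow 2))).congr_deriv ?_
  norm_num
  ring

lemma hasDerivAt_mul (x : ℝ) :
    HasDerivAt (fun x ↦ w x * v x) (v x ^ 2 - weberPot s x * w x ^ 2) x := by
  refine ((h.hasDerivAt_fst x).mul (h.hasDerivAt_snd x)).congr_deriv ?_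
  ring

lemma hasDerivAt_adiabaticInvariant {x : ℝ} (hq : 0 < weberPot s x) :
    HasDerivAt (adiabaticInvariant s w v)
      (adiabaticWeight s x * (v x ^ 2 - weberPot s x * w x ^ 2)) x := by
  have hr : 0 < √(weberPot s x) := sqrt_pos.2 hq
  refine ((h.hasDerivAt_weberEnergy x).div ((hasDerivAt_weberPot s x).sqrt hq.ne')
    hr.ne').congr_deriv ?_
  rw [adiabaticWeight, weberEnergy]
  set r := √(weberPot s x)
  rw [← sq_sqrt hq.le]
  field_simp
  ring

theorem adiabaticInvariant_le (hs : 1 ≤ s) {x : ℝ} (hx : x ∈ Icc 0 (weberEdge s)) :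
    adiabaticInvariant s w v x ≤ 2 * adiabaticInvariant s w v 0 := by
  set V := adiabaticInvariant s w v
  set Y := weberEdge s
  have hq : ∀ x ∈ Icc 0 Y, 0 < weberPot s x := fun x hx ↦
    (pow_pos (by linarith) 2).trans_le (sq_le_weberPot hs hx)
  have h0 : (0 : ℝ) ∈ Icc 0 Y := ⟨le_rfl, weberEdge_nonneg⟩
  obtain ⟨c, hc, hcmax⟩ := isCompact_Icc.exists_isMaxOn ⟨0, h0⟩ fun x hx ↦
    (h.hasDerivAt_adiabaticInvariant (hq x hx)).continuousAt.continuousWithinAt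
  set M := V c
  have hM : ∀ x ∈ Icc 0 Y, V x ≤ M := isMaxOn_iff.1 hcmax
  have hwv : ∀ x ∈ Icc 0 Y, |w x * v x| ≤ M / 2 := fun x hx ↦
    (abs_mul_le_adiabaticInvariant w v (hq x hx)).trans (by linarith [hM x hx])
  -- `F` is `V` minus the boundary term from integrating `V' = g (w v)'` by parts.
  set F := fun x ↦ V x - adiabaticWeight s x * (w x * v x + M / 2)
  have hF : ∀ x ∈ Icc 0 Y, ∃ F', HasDerivAt F F' x ∧ F' ≤ 0 := by
    intro x hx
    have hqx := hq x hx
    refine ⟨_, ((h.hasDerivAt_adiabaticInvariant hqx).sub ((hasDerivAt_adiabaticWeight hqx).mul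
      ((h.hasDerivAt_mul x).add_const (M / 2)))), ?_⟩
    have : 0 ≤ (4 * weberPot s x + 3 * x ^ 2) / (16 * weberPot s x ^ 2 * √(weberPot s x)) := by
      positivity
    nlinarith [abs_le.1 (hwv x hx)]
  have hFdiff : ∀ x ∈ Icc 0 Y, DifferentiableAt ℝ F x := fun x hx ↦
    (hF x hx).elim fun _ hF' ↦ hF'.1.differentiableAt
  have hFanti : AntitoneOn F (Icc 0 Y) := by
    refine antitoneOn_of_deriv_nonpos (convex_Icc 0 Y)
      (fun x hx ↦ (hFdiff x hx).continuousAt.continuousWithinAt)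
      (fun x hx ↦ (hFdiff x (interior_subset hx)).differentiableWithinAt) fun x hx ↦ ?_
    obtain ⟨F', hF', hF'0⟩ := hF x (interior_subset hx)
    rwa [hF'.deriv]
  have hVle : ∀ x ∈ Icc 0 Y, V x ≤ V 0 + M / 2 := by
    intro x hx
    have hFx := hFanti h0 hx hx.1
    have hg := adiabaticWeight_le hs hx
    have hg0 : 0 ≤ adiabaticWeight s x := div_nonneg hx.1 (by have := hq x hx; positivity)
    have hg00 : adiabaticWeight s 0 = 0 := zero_div _
    simp only [F, hg00, zero_mul, sub_zero] at hFx
    nlinarith [abs_le.1 (hwv x hx)]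
  linarith [hVle c hc, hM x hx]

lemma sq_le_of_mem_Icc_weberEdge (hs : 1 ≤ s) {x : ℝ} (hx : x ∈ Icc 0 (weberEdge s)) :
    w x ^ 2 ≤ 2 * weberEnergy s w v 0 / s ^ 4 := by
  have hs0 : 0 < s := by linarith
  have hq := sq_le_weberPot hs hx
  have hr : s ≤ √(weberPot s x) := by simpa [sqrt_sq hs0.le] using sqrt_le_sqrt hq
  have hV0 : 0 ≤ adiabaticInvariant s w v 0 := by
    rw [adiabaticInvariant_zero w v hs0.le]; have := weberEnergy_zero_nonneg s w v; positivity
  calc w x ^ 2 ≤ adiabaticInvariant s w v x / √(weberPot s x) :=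
        sq_le_adiabaticInvariant_div w v ((pow_pos hs0 2).trans_le hq)
    _ ≤ 2 * adiabaticInvariant s w v 0 / s :=
        div_le_div₀ (by linarith) (h.adiabaticInvariant_le hs hx) hs0 hr
    _ = 2 * weberEnergy s w v 0 / s ^ 4 := by
        rw [adiabaticInvariant_zero w v hs0.le]; field_simp

lemma weberEnergy_weberEdge_le (hs : 1 ≤ s) :
    weberEnergy s w v (weberEdge s) ≤ 2 * weberEnergy s w v 0 / s ^ 2 := by
  have hs0 : 0 < s := by linarith
  have hY : weberEdge s ∈ Icc 0 (weberEdge s) := ⟨weberEdge_nonneg, le_rfl⟩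
  have hV := h.adiabaticInvariant_le hs hY
  rw [adiabaticInvariant, adiabaticInvariant_zero w v hs0.le, weberPot_weberEdge hs,
    sqrt_sq hs0.le, div_le_iff₀ hs0] at hV
  calc _ ≤ _ := hV
    _ = _ := by field_simp

theorem sq_add_sq_div_le {ω a b : ℝ} (hω : 0 < ω) (hq : ∀ x ∈ Icc a b, |weberPot s x| ≤ ω ^ 2)
    {x : ℝ} (hx : x ∈ Icc a b) :
    w x ^ 2 + (v x / ω) ^ 2 ≤ (w a ^ 2 + (v a / ω) ^ 2) * exp (2 * ω * (x - a)) := by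
  have hm : ∀ t, HasDerivAt (fun t ↦ w t ^ 2 + (v t / ω) ^ 2)
      (2 * w t * v t + 2 * (v t / ω) * (-(weberPot s t * w t) / ω)) t := fun t ↦ by
    refine (((h.hasDerivAt_fst t).pow 2).add
      (((h.hasDerivAt_snd t).div_const ω).pow 2)).congr_deriv ?_
    norm_num
  have hbound : ∀ t ∈ Ico a b, 2 * w t * v t + 2 * (v t / ω) * (-(weberPot s t * w t) / ω) ≤
      2 * ω * (w t ^ 2 + (v t / ω) ^ 2) + 0 := fun t ht ↦ by
    set u := v t / ω
    have hp : |ω - weberPot s t / ω| ≤ 2 * ω := by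
      have : |weberPot s t / ω| ≤ ω := by
        rw [abs_div, abs_of_pos hω, div_le_iff₀ hω, ← sq]; exact hq t (Ico_subset_Icc_self ht)
      linarith [abs_sub (ω) (weberPot s t / ω), abs_of_pos hω]
    have hwu : |2 * w t * u| ≤ w t ^ 2 + u ^ 2 :=
      abs_le.2 ⟨by nlinarith [sq_nonneg (w t + u)], two_mul_le_add_sq _ _⟩
    calc _ = (ω - weberPot s t / ω) * (2 * w t * u) := by
          simp only [u]; field_simp; ring
      _ ≤ |ω - weberPot s t / ω| * |2 * w t * u| := by rw [← abs_mul]; exact le_abs_self _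
      _ ≤ 2 * ω * (w t ^ 2 + u ^ 2) := mul_le_mul hp hwu (abs_nonneg _) (by positivity)
      _ = _ := by ring
  have := le_gronwallBound_of_liminf_deriv_right_le
    (fun t _ ↦ (hm t).continuousAt.continuousWithinAt)
    (fun t _ r hr ↦ (hm t).hasDerivWithinAt.liminf_right_slope_le hr) le_rfl hbound x hx
  rwa [gronwallBound_ε0] at this

theorem sq_le_sq_of_weberPot_nonpos {a x : ℝ} (ha : 0 ≤ a) (hqa : weberPot s a ≤ 0)
    (hlim : Tendsto w atTop (𝓝 0)) (hx : a ≤ x) : w x ^ 2 ≤ w a ^ 2 := by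
  have hsq : ∀ t, HasDerivAt (fun t ↦ w t ^ 2) (2 * (w t * v t)) t := fun t ↦ by
    refine ((h.hasDerivAt_fst t).pow 2).congr_deriv ?_
    norm_num
    ring
  have hwv : ∀ t, HasDerivAt (fun t ↦ 2 * (w t * v t)) (2 * (v t ^ 2 - weberPot s t * w t ^ 2)) t :=
    fun t ↦ (h.hasDerivAt_mul t).const_mul 2
  have hmono : MonotoneOn (fun t ↦ 2 * (w t * v t)) (Ici a) :=
    monotoneOn_of_hasDerivWithinAt_nonneg (convex_Ici a)
      (fun t _ ↦ (hwv t).continuousAt.continuousWithinAt) (fun t _ ↦ (hwv t).hasDerivWithinAt)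
      fun t ht ↦ by
        rw [interior_Ici] at ht
        have : weberPot s t ≤ 0 := (weberPot_le_weberPot ha (le_of_lt ht)).trans hqa
        nlinarith [sq_nonneg (v t), sq_nonneg (w t)]
  have hconv : ConvexOn ℝ (Ici a) (fun t ↦ w t ^ 2) := by
    refine MonotoneOn.convexOn_of_deriv (convex_Ici a)
      (fun t _ ↦ (hsq t).continuousAt.continuousWithinAt)
      (fun t _ ↦ (hsq t).differentiableAt.differentiableWithinAt) ?_
    rw [funext fun t ↦ (hsq t).deriv]
    exact hmono.mono interior_subset
  exact hconv.le_left_of_tendsto_atTop (by simpa using hlim.pow 2) (sq_nonneg _) hx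

lemma sq_le_of_mem_Icc_weberEdge_add (hs : 1 ≤ s) {x : ℝ}
    (hx : x ∈ Icc (weberEdge s) (weberEdge s + 4 / s)) :
    w x ^ 2 ≤ 3 * exp 24 * weberEnergy s w v 0 / s ^ 4 := by
  have hs0 : 0 < s := by linarith
  set E₀ := weberEnergy s w v 0
  set Y := weberEdge s
  have hE₀ := weberEnergy_zero_nonneg s w v
  have hvY : v Y ^ 2 ≤ 2 * E₀ / s ^ 2 :=
    (le_add_of_nonneg_right (by rw [weberPot_weberEdge hs]; positivity)).trans
      (h.weberEnergy_weberEdge_le hs)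
  have hmY : w Y ^ 2 + (v Y / (3 * s)) ^ 2 ≤ 3 * E₀ / s ^ 4 := by
    have hwY := h.sq_le_of_mem_Icc_weberEdge hs ⟨weberEdge_nonneg, le_rfl⟩
    have : (v Y / (3 * s)) ^ 2 ≤ E₀ / s ^ 4 := by
      rw [div_pow, div_le_div_iff₀ (by positivity) (by positivity)]
      rw [le_div_iff₀ (by positivity)] at hvY
      nlinarith [pow_pos hs0 2]
    calc _ ≤ 2 * E₀ / s ^ 4 + E₀ / s ^ 4 := add_le_add hwY this
      _ = _ := by ring
  have hexp : exp (2 * (3 * s) * (x - Y)) ≤ exp 24 := by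
    have : x - Y ≤ 4 / s := by linarith [hx.2]
    rw [exp_le_exp]
    calc 2 * (3 * s) * (x - Y) ≤ 2 * (3 * s) * (4 / s) := by gcongr
      _ = 24 := by field_simp; ring
  calc w x ^ 2 ≤ w x ^ 2 + (v x / (3 * s)) ^ 2 := le_add_of_nonneg_right (sq_nonneg _)
    _ ≤ _ := h.sq_add_sq_div_le (by positivity) (fun t ht ↦ abs_weberPot_le hs ht) hx
    _ ≤ 3 * E₀ / s ^ 4 * exp 24 := mul_le_mul hmY hexp (exp_pos _).le (by positivity)
    _ = _ := by ring

theorem sq_le (hs : 21 / 20 ≤ s) (hlim : Tendsto w atTop (𝓝 0)) {x : ℝ} (hx : 0 ≤ x) :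
    w x ^ 2 ≤ 3 * exp 24 * weberEnergy s w v 0 / s ^ 4 := by
  have hs1 : 1 ≤ s := by linarith
  have hY : 0 ≤ weberEdge s := weberEdge_nonneg
  have hYZ : weberEdge s ≤ weberEdge s + 4 / s := le_add_of_nonneg_right (by positivity)
  rcases le_total x (weberEdge s) with hxY | hYx
  · refine (h.sq_le_of_mem_Icc_weberEdge hs1 ⟨hx, hxY⟩).trans ?_
    have := weberEnergy_zero_nonneg s w v
    gcongr
    nlinarith [one_le_exp (by norm_num : (0 : ℝ) ≤ 24)]
  rcases le_total x (weberEdge s + 4 / s) with hxZ | hZx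
  · exact h.sq_le_of_mem_Icc_weberEdge_add hs1 ⟨hYx, hxZ⟩
  exact (h.sq_le_sq_of_weberPot_nonpos (hY.trans hYZ) (weberPot_weberEdge_add_nonpos hs) hlim
    hZx).trans (h.sq_le_of_mem_Icc_weberEdge_add hs1 ⟨hYZ, le_rfl⟩)

end IsWeberSolution

def hermiteFun (n : ℕ) (x : ℝ) : ℝ := exp (-x ^ 2 / 4) * He n x

def hermiteFunDeriv (n : ℕ) (x : ℝ) : ℝ :=
  exp (-x ^ 2 / 4) * (aeval x (derivative (hermite n)) - x / 2 * He n x)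

lemma hasDerivAt_exp_neg_sq_div_four (x : ℝ) :
    HasDerivAt (fun x ↦ exp (-x ^ 2 / 4)) (-(x / 2) * exp (-x ^ 2 / 4)) x := by
  refine (((hasDerivAt_pow 2 x).neg.div_const 4).exp).congr_deriv ?_
  norm_num
  ring

theorem isWeberSolution_hermiteFun {s : ℝ} {n : ℕ} (hs : s ^ 6 = n + 1 / 2) :
    IsWeberSolution s (hermiteFun n) (hermiteFunDeriv n) where
  hasDerivAt_fst x := by
    refine ((hasDerivAt_exp_neg_sq_div_four x).mul (hasDerivAt_He n x)).congr_deriv ?_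
    rw [hermiteFunDeriv]
    ring
  hasDerivAt_snd x := by
    refine ((hasDerivAt_exp_neg_sq_div_four x).mul
      ((hasDerivAt_aeval_derivative_hermite n x).sub
        (((hasDerivAt_id x).div_const 2).mul (hasDerivAt_He n x)))).congr_deriv ?_
    rw [hermiteFun, weberPot, hs]
    simp only [Pi.sub_apply, Pi.mul_apply, id]
    ring

lemma tendsto_hermiteFun_atTop (n : ℕ) : Tendsto (hermiteFun n) atTop (𝓝 0) := by
  have hle : ∀ x, ‖hermiteFun n x‖ ≤ ‖He n x / exp x‖ * exp 1 := fun x ↦ by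
    have heq : hermiteFun n x = He n x / exp x * exp (x - x ^ 2 / 4) := by
      rw [hermiteFun, show x - x ^ 2 / 4 = -x ^ 2 / 4 + x by ring, exp_add]
      field_simp
    rw [heq, norm_mul, Real.norm_of_nonneg (exp_pos _).le]
    gcongr
    nlinarith [sq_nonneg (x - 2)]
  have hP := tendsto_div_exp_atTop ((hermite n).map (algebraMap ℤ ℝ))
  simp only [eval_map_algebraMap] at hP
  refine squeeze_zero_norm hle ?_
  simpa [He] using hP.norm.mul_const (exp 1)

lemma hermiteFun_neg_sq (n : ℕ) (x : ℝ) : hermiteFun n (-x) ^ 2 = hermiteFun n x ^ 2 := by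
  rw [hermiteFun, hermiteFun, He_neg, neg_sq, mul_pow, mul_pow, mul_pow, ← pow_mul,
    mul_comm n 2, pow_mul]
  norm_num

theorem weberEnergy_hermiteFun_zero_le (n : ℕ) {s : ℝ} (hs₀ : 0 ≤ s)
    (hs : s ^ 6 = n + 1 + 1 / 2) :
    weberEnergy s (hermiteFun (n + 1)) (hermiteFunDeriv (n + 1)) 0 ≤ 2 * (n + 1)! * s ^ 3 := by
  have hv : hermiteFunDeriv (n + 1) 0 = (n + 1) * He n 0 := by
    rw [hermiteFunDeriv, derivative_hermite_succ]
    simp [He]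
  have hw : hermiteFun (n + 1) 0 = He (n + 1) 0 := by simp [hermiteFun]
  have hs6 : s ^ 6 = (s ^ 3) ^ 2 := by ring
  rw [weberEnergy, weberPot, hv, hw, Nat.factorial_succ]
  push_cast
  have hF : (0 : ℝ) < n ! := by exact_mod_cast n.factorial_pos
  rcases mul_eq_zero.1 (He_zero_mul_He_succ_zero n) with h0 | h0
  · have hb := succ_mul_He_zero_pow_four_le (n + 1)
    rw [Nat.factorial_succ] at hb
    push_cast at hb
    have key : s ^ 3 * He (n + 1) 0 ^ 2 ≤ 2 * ((n + 1) * n !) := by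
      refine le_of_sq_le_sq ?_ (by positivity)
      rw [mul_pow, ← pow_mul, ← pow_mul, hs]
      nlinarith [pow_nonneg (sq_nonneg (He (n + 1) 0)) 2]
    rw [h0, hs6]
    nlinarith [pow_nonneg hs₀ 3]
  · have ha := succ_mul_He_zero_pow_four_le n
    have key : (n + 1) * He n 0 ^ 2 ≤ 2 * n ! * s ^ 3 := by
      refine le_of_sq_le_sq ?_ (by positivity)
      rw [mul_pow, mul_pow, ← pow_mul, ← pow_mul, hs]
      nlinarith [pow_nonneg (sq_nonneg (He n 0)) 2]
    rw [h0]
    nlinarith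

theorem hermiteFun_sq_le {k : ℕ} (hk : 1 ≤ k) (x : ℝ) :
    hermiteFun k x ^ 2 ≤ 6 * exp 24 * k ! * (k : ℝ) ^ (-(1 / 6 : ℝ)) := by
  obtain ⟨n, rfl⟩ : ∃ n, k = n + 1 := ⟨k - 1, by omega⟩
  wlog hx : 0 ≤ x generalizing x
  · rw [← hermiteFun_neg_sq]
    exact this (-x) (by linarith)
  have hL : (0 : ℝ) < n + 1 + 1 / 2 := by positivity
  set s := ((n + 1 : ℝ) + 1 / 2) ^ (1 / 6 : ℝ)
  have hs₀ : 0 < s := rpow_pos_of_pos hL _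
  have hs6 : s ^ 6 = n + 1 + 1 / 2 := by
    rw [← rpow_natCast, ← rpow_mul hL.le]
    norm_num
  have hs : 21 / 20 ≤ s :=
    le_of_pow_le_pow_left₀ (by norm_num : 6 ≠ 0) hs₀.le
      (by rw [hs6]; linarith [n.cast_nonneg (α := ℝ)])
  have hks : ((n + 1 : ℕ) : ℝ) ^ (1 / 6 : ℝ) ≤ s :=
    rpow_le_rpow (by positivity) (by push_cast; linarith) (by norm_num)
  have hsol := isWeberSolution_hermiteFun (n := n + 1) (s := s) (by rw [hs6]; push_cast; ring)
  calc hermiteFun (n + 1) x ^ 2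
      ≤ 3 * exp 24 * weberEnergy s (hermiteFun (n + 1)) (hermiteFunDeriv (n + 1)) 0 / s ^ 4 :=
        hsol.sq_le hs (tendsto_hermiteFun_atTop _) hx
    _ ≤ 3 * exp 24 * (2 * (n + 1)! * s ^ 3) / s ^ 4 := by
        gcongr
        exact weberEnergy_hermiteFun_zero_le n hs₀.le hs6
    _ = 6 * exp 24 * (n + 1)! * s⁻¹ := by field_simp; ring
    _ ≤ _ := by
        rw [rpow_neg (by positivity)]
        gcongr

/-- there is a constant `C₀ > 0` with
`|e^{−y²/2} H_k(y)| ≤ C₀ √(k!) k^{−1/12} e^{−y²/4}` for all `k ≥ 1` and all real `y`. -/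
theorem stmt12 :
    ∃ C : ℝ, 0 < C ∧ ∀ k : ℕ, 1 ≤ k → ∀ y : ℝ,
      |Real.exp (-y ^ 2 / 2) * He k y| ≤
        C * Real.sqrt (Nat.factorial k) * (k : ℝ) ^ (-(1 / 12 : ℝ)) *
          Real.exp (-y ^ 2 / 4) := by
  refine ⟨√(6 * exp 24), by positivity, fun k hk y ↦ ?_⟩
  have hsplit : exp (-y ^ 2 / 2) * He k y = exp (-y ^ 2 / 4) * hermiteFun k y := by
    rw [hermiteFun, ← mul_assoc, ← exp_add]
    ring_nf
  have hbound : |hermiteFun k y| ≤ √(6 * exp 24) * √(k !) * (k : ℝ) ^ (-(1 / 12 : ℝ)) := by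
    refine (abs_le_sqrt (hermiteFun_sq_le hk y)).trans_eq ?_
    rw [sqrt_mul (by positivity), sqrt_mul (by positivity), sqrt_eq_rpow ((k : ℝ) ^ _),
      ← rpow_mul (by positivity)]
    norm_num
  rw [hsplit, abs_mul, abs_of_pos (exp_pos _), mul_comm]
  exact mul_le_mul_of_nonneg_right hbound (exp_pos _).le
end
end

section
/- There exists a universal constant C > 0 such that for every centered bivariate normal vector (X, Y) with unit variances and correlation ρ ∈ (−1, 1), and every t > 0, |Cov(1{|X| ≤ t}, 1{|Y| ≤ t})| ≤ C·|ρ|. -/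
/-! For `|ρ| ≤ 1/4` write `f_ρ = (1 - ρ²)^(-1/2) e^a f_0` with `|a| ≤ (2/3)|ρ|(x² + y²)`.
The factor `e^|a| ≤ e^((x² + y²)/6)` is absorbed by the Gaussian factor `e^(-(x² + y²)/2)` of
`f_0`, so `|f_ρ - f_0| ≤ 15|ρ| g`, where `g` is the density of two independent centred normals
of variance `3`. Hence every event has probabilities within `15|ρ|` under the law of `(X, Y)`
and under the independent law `f_0`, where the covariance vanishes; a covariance of events moves
by at most three times such a perturbation. For `|ρ| > 1/4` the covariance is trivially at most
`1 < 4|ρ|`. -/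

open Real MeasureTheory ProbabilityTheory
open scoped ProbabilityTheory NNReal

noncomputable section

lemma abs_exp_sub_one_le_mul_exp_abs (a : ℝ) : |exp a - 1| ≤ |a| * exp |a| := by
  rcases le_or_gt 0 a with ha | ha
  · rw [abs_of_nonneg ha, abs_of_nonneg (sub_nonneg.2 (one_le_exp ha))]
    have h : (1 - a) * exp a ≤ 1 := by
      simpa [← exp_add] using mul_le_mul_of_nonneg_right (one_sub_le_exp_neg a) (exp_pos a).le
    linarith
  · rw [abs_of_neg ha, abs_of_nonpos (sub_nonpos.2 (exp_le_one_iff.2 ha.le))]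
    nlinarith [add_one_le_exp a, one_le_exp (neg_nonneg.2 ha.le)]

lemma abs_mul_exp_sub_one_le {c : ℝ} (hc : 1 ≤ c) (a : ℝ) :
    |c * exp a - 1| ≤ c * (|a| * exp |a|) + (c - 1) :=
  calc |c * exp a - 1| = |c * (exp a - 1) + (c - 1)| := by ring_nf
    _ ≤ |c * (exp a - 1)| + |c - 1| := abs_add_le _ _
    _ ≤ c * (|a| * exp |a|) + (c - 1) := by
      rw [abs_mul, abs_of_nonneg (by linarith : 0 ≤ c), abs_of_nonneg (by linarith : 0 ≤ c - 1)]
      gcongr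
      exact abs_exp_sub_one_le_mul_exp_abs a

lemma mul_exp_neg_div_le (s : ℝ) {k : ℝ} (hk : 0 < k) : s * exp (-s / k) ≤ k := by
  have h := add_one_le_exp (s / k)
  have h' : exp (s / k) * exp (-s / k) = 1 := by rw [← exp_add]; ring_nf; exact exp_zero
  have hpos := exp_pos (-s / k)
  have : s / k * exp (-s / k) ≤ 1 := by nlinarith
  rwa [div_mul_eq_mul_div, div_le_one hk] at this

def bivariateGaussianPDF (ρ : ℝ) (q : ℝ × ℝ) : ℝ :=
  (2 * π * √(1 - ρ ^ 2))⁻¹ *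
    exp (-(q.1 ^ 2 + q.2 ^ 2 - 2 * ρ * q.1 * q.2) / (2 * (1 - ρ ^ 2)))

lemma bivariateGaussianPDF_pos {ρ : ℝ} (hρ : ρ ^ 2 < 1) (q : ℝ × ℝ) :
    0 < bivariateGaussianPDF ρ q := by
  have : 0 < √(1 - ρ ^ 2) := Real.sqrt_pos.2 (by linarith)
  unfold bivariateGaussianPDF; positivity

lemma measurable_bivariateGaussianPDF (ρ : ℝ) : Measurable (bivariateGaussianPDF ρ) := by
  unfold bivariateGaussianPDF; fun_prop

lemma gaussianPDFReal_zero_mul_gaussianPDFReal_zero {v : ℝ≥0} (hv : v ≠ 0) (x y : ℝ) :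
    gaussianPDFReal 0 v x * gaussianPDFReal 0 v y =
      (2 * π * v)⁻¹ * exp (-(x ^ 2 + y ^ 2) / (2 * v)) := by
  have : (0 : ℝ) < v := by positivity
  simp only [gaussianPDFReal, sub_zero]
  rw [mul_mul_mul_comm, ← mul_inv, Real.mul_self_sqrt (by positivity), ← exp_add]
  ring_nf

lemma bivariateGaussianPDF_zero (q : ℝ × ℝ) :
    bivariateGaussianPDF 0 q = gaussianPDFReal 0 1 q.1 * gaussianPDFReal 0 1 q.2 := by
  rw [gaussianPDFReal_zero_mul_gaussianPDFReal_zero one_ne_zero, bivariateGaussianPDF]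
  norm_num

lemma bivariateGaussianPDF_eq_mul {ρ : ℝ} (hρ : ρ ^ 2 < 1) (q : ℝ × ℝ) :
    bivariateGaussianPDF ρ q = (√(1 - ρ ^ 2))⁻¹ *
      exp (ρ * (2 * q.1 * q.2 - ρ * (q.1 ^ 2 + q.2 ^ 2)) / (2 * (1 - ρ ^ 2))) *
        bivariateGaussianPDF 0 q := by
  have h : 0 < 1 - ρ ^ 2 := by linarith
  simp only [bivariateGaussianPDF]
  rw [show -(q.1 ^ 2 + q.2 ^ 2 - 2 * ρ * q.1 * q.2) / (2 * (1 - ρ ^ 2)) =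
      ρ * (2 * q.1 * q.2 - ρ * (q.1 ^ 2 + q.2 ^ 2)) / (2 * (1 - ρ ^ 2)) +
        -(q.1 ^ 2 + q.2 ^ 2 - 2 * 0 * q.1 * q.2) / (2 * (1 - 0 ^ 2)) by field_simp; ring,
    exp_add, mul_inv]
  norm_num
  ring

lemma inv_sqrt_one_sub_sq_le {ρ : ℝ} (hρ : |ρ| ≤ 1 / 4) :
    (√(1 - ρ ^ 2))⁻¹ ≤ 1 + |ρ| / 2 := by
  have hsq : ρ ^ 2 = |ρ| ^ 2 := (sq_abs ρ).symm
  have h0 : 0 < 1 - ρ ^ 2 := by nlinarith [abs_nonneg ρ]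
  have h1 : 1 - ρ ^ 2 ≤ √(1 - ρ ^ 2) := by
    rw [Real.le_sqrt h0.le h0.le]; nlinarith
  rw [inv_le_iff_one_le_mul₀ (by positivity)]
  nlinarith [abs_nonneg ρ]

lemma one_le_inv_sqrt_one_sub_sq {ρ : ℝ} (hρ : ρ ^ 2 < 1) : 1 ≤ (√(1 - ρ ^ 2))⁻¹ := by
  rw [one_le_inv₀ (by simpa using hρ)]
  exact Real.sqrt_le_one.2 (by nlinarith)

lemma abs_bivariateGaussian_exponent_le {ρ : ℝ} (hρ : |ρ| ≤ 1 / 4) (x y : ℝ) :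
    |ρ * (2 * x * y - ρ * (x ^ 2 + y ^ 2)) / (2 * (1 - ρ ^ 2))| ≤
      2 / 3 * |ρ| * (x ^ 2 + y ^ 2) := by
  have hsq : ρ ^ 2 = |ρ| ^ 2 := (sq_abs ρ).symm
  have hden : 15 / 8 ≤ 2 * (1 - ρ ^ 2) := by nlinarith [abs_nonneg ρ]
  have hxy : |2 * x * y| ≤ x ^ 2 + y ^ 2 := by
    rw [abs_le]; constructor <;> nlinarith [sq_nonneg (x + y), sq_nonneg (x - y)]
  have hnum : |2 * x * y - ρ * (x ^ 2 + y ^ 2)| ≤ 5 / 4 * (x ^ 2 + y ^ 2) := by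
    calc _ ≤ |2 * x * y| + |ρ * (x ^ 2 + y ^ 2)| := abs_sub _ _
      _ = |2 * x * y| + |ρ| * (x ^ 2 + y ^ 2) := by
        rw [abs_mul ρ, abs_of_nonneg (by positivity : 0 ≤ x ^ 2 + y ^ 2)]
      _ ≤ 5 / 4 * (x ^ 2 + y ^ 2) := by nlinarith [sq_nonneg x, sq_nonneg y]
  rw [abs_div, abs_mul, abs_of_pos (by linarith : 0 < 2 * (1 - ρ ^ 2)),
    div_le_iff₀ (by linarith)]
  calc |ρ| * |2 * x * y - ρ * (x ^ 2 + y ^ 2)| ≤ |ρ| * (5 / 4 * (x ^ 2 + y ^ 2)) := by gcongr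
    _ ≤ 2 / 3 * |ρ| * (x ^ 2 + y ^ 2) * (2 * (1 - ρ ^ 2)) := by
      have : 0 ≤ |ρ| * (x ^ 2 + y ^ 2) := by positivity
      nlinarith

lemma abs_bivariateGaussianPDF_sub_le {ρ : ℝ} (hρ : |ρ| ≤ 1 / 4) (q : ℝ × ℝ) :
    |bivariateGaussianPDF ρ q - bivariateGaussianPDF 0 q| ≤
      15 * |ρ| * (gaussianPDFReal 0 3 q.1 * gaussianPDFReal 0 3 q.2) := by
  obtain ⟨x, y⟩ := q
  have hρ1 : ρ ^ 2 < 1 := (sq_lt_one_iff_abs_lt_one ρ).2 (by linarith)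
  set s := x ^ 2 + y ^ 2 with hs
  set c := (√(1 - ρ ^ 2))⁻¹
  set a := ρ * (2 * x * y - ρ * s) / (2 * (1 - ρ ^ 2))
  set E := exp (-s / 6)
  have hc1 : 1 ≤ c := one_le_inv_sqrt_one_sub_sq hρ1
  have hc : c ≤ 1 + |ρ| / 2 := inv_sqrt_one_sub_sq_le hρ
  have ha : |a| ≤ 2 / 3 * |ρ| * s := abs_bivariateGaussian_exponent_le hρ x y
  have hexp : exp |a| ≤ E⁻¹ := by
    rw [← exp_neg, neg_div, neg_neg]; exact exp_le_exp.2 (by nlinarith [abs_nonneg ρ])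
  have hF0 : bivariateGaussianPDF 0 (x, y) = (2 * π)⁻¹ * (E * E * E) := by
    rw [bivariateGaussianPDF_zero, gaussianPDFReal_zero_mul_gaussianPDFReal_zero one_ne_zero,
      ← exp_add, ← exp_add]
    norm_num [E, hs]; ring_nf
  have hG3 : gaussianPDFReal 0 3 x * gaussianPDFReal 0 3 y = (6 * π)⁻¹ * E := by
    rw [gaussianPDFReal_zero_mul_gaussianPDFReal_zero (by norm_num)]
    norm_num [E, hs]; ring_nf
  have hE0 : 0 < E := exp_pos _
  have hE1 : E ≤ 1 := exp_le_one_iff.2 (by simp only [hs]; nlinarith [sq_nonneg x, sq_nonneg y])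
  have hsE : s * E ≤ 6 := mul_exp_neg_div_le s (by norm_num)
  have hbound : |c * exp a - 1| ≤ |ρ| * (3 / 4 * s * E⁻¹ + 1 / 2) := by
    calc |c * exp a - 1| ≤ c * (|a| * exp |a|) + (c - 1) := abs_mul_exp_sub_one_le hc1 a
      _ ≤ (1 + 1 / 8) * (2 / 3 * |ρ| * s * E⁻¹) + |ρ| / 2 := by
        gcongr
        · linarith
        · linarith
      _ = |ρ| * (3 / 4 * s * E⁻¹ + 1 / 2) := by ring
  calc |bivariateGaussianPDF ρ (x, y) - bivariateGaussianPDF 0 (x, y)|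
      = bivariateGaussianPDF 0 (x, y) * |c * exp a - 1| := by
        rw [bivariateGaussianPDF_eq_mul hρ1, ← sub_one_mul, abs_mul, mul_comm,
          abs_of_nonneg (by rw [hF0]; positivity)]
    _ ≤ (2 * π)⁻¹ * (E * E * E) * (|ρ| * (3 / 4 * s * E⁻¹ + 1 / 2)) := by
        rw [hF0]; gcongr
    _ = (2 * π)⁻¹ * |ρ| * (3 / 4 * (s * E) * E + E * E * E / 2) := by
        field_simp
    _ ≤ (2 * π)⁻¹ * |ρ| * (3 / 4 * 6 * E + E / 2) := by
        gcongr
        nlinarith [mul_pos hE0 hE0]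
    _ = 15 * |ρ| * ((6 * π)⁻¹ * E) := by
        field_simp; ring
    _ = _ := by rw [hG3]

lemma integrable_gaussianPDFReal_mul_gaussianPDFReal (v : ℝ≥0) :
    Integrable fun q : ℝ × ℝ => gaussianPDFReal 0 v q.1 * gaussianPDFReal 0 v q.2 := by
  rw [Measure.volume_eq_prod]
  exact (integrable_gaussianPDFReal 0 v).mul_prod (integrable_gaussianPDFReal 0 v)

lemma integral_gaussianPDFReal_mul_gaussianPDFReal {v : ℝ≥0} (hv : v ≠ 0) :
    ∫ q : ℝ × ℝ, gaussianPDFReal 0 v q.1 * gaussianPDFReal 0 v q.2 = 1 := by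
  rw [Measure.volume_eq_prod, integral_prod_mul, integral_gaussianPDFReal_eq_one 0 hv, one_mul]

lemma integrable_bivariateGaussianPDF {ρ : ℝ} (hρ : |ρ| ≤ 1 / 4) :
    Integrable (bivariateGaussianPDF ρ) := by
  have hdom : Integrable fun q => bivariateGaussianPDF 0 q +
      15 * |ρ| * (gaussianPDFReal 0 3 q.1 * gaussianPDFReal 0 3 q.2) := by
    simp only [bivariateGaussianPDF_zero]
    exact (integrable_gaussianPDFReal_mul_gaussianPDFReal 1).add
      ((integrable_gaussianPDFReal_mul_gaussianPDFReal 3).const_mul _)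
  refine hdom.mono' (measurable_bivariateGaussianPDF ρ).aestronglyMeasurable
    (.of_forall fun q => ?_)
  have hρ1 : ρ ^ 2 < 1 := (sq_lt_one_iff_abs_lt_one ρ).2 (by linarith)
  rw [Real.norm_eq_abs, abs_of_pos (bivariateGaussianPDF_pos hρ1 q)]
  linarith [(abs_le.1 (abs_bivariateGaussianPDF_sub_le hρ q)).2]

lemma integral_abs_bivariateGaussianPDF_sub_le {ρ : ℝ} (hρ : |ρ| ≤ 1 / 4) :
    ∫ q, |bivariateGaussianPDF ρ q - bivariateGaussianPDF 0 q| ≤ 15 * |ρ| :=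
  calc ∫ q, |bivariateGaussianPDF ρ q - bivariateGaussianPDF 0 q|
      ≤ ∫ q : ℝ × ℝ, 15 * |ρ| * (gaussianPDFReal 0 3 q.1 * gaussianPDFReal 0 3 q.2) :=
        integral_mono ((integrable_bivariateGaussianPDF hρ).sub
            (integrable_bivariateGaussianPDF (by simp))).abs
          ((integrable_gaussianPDFReal_mul_gaussianPDFReal 3).const_mul _)
          (abs_bivariateGaussianPDF_sub_le hρ)
    _ = 15 * |ρ| := by
        rw [integral_const_mul, integral_gaussianPDFReal_mul_gaussianPDFReal (by norm_num),
          mul_one]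

lemma gaussianReal_prod_gaussianReal :
    (gaussianReal 0 1).prod (gaussianReal 0 1) =
      volume.withDensity fun q => ENNReal.ofReal (bivariateGaussianPDF 0 q) := by
  rw [gaussianReal_of_var_ne_zero 0 one_ne_zero, prod_withDensity (measurable_gaussianPDF 0 1)
    (measurable_gaussianPDF 0 1), ← Measure.volume_eq_prod]
  congr with q
  rw [bivariateGaussianPDF_zero, ENNReal.ofReal_mul (gaussianPDFReal_nonneg 0 1 _)]
  rfl

lemma withDensity_bivariateGaussianPDF_ne_zero {ρ : ℝ} (hρ : ρ ^ 2 < 1) :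
    (volume.withDensity fun q => ENNReal.ofReal (bivariateGaussianPDF ρ q)) ≠ 0 := by
  rw [Ne, withDensity_eq_zero_iff
    (measurable_bivariateGaussianPDF ρ).ennreal_ofReal.aemeasurable]
  intro h
  obtain ⟨q, hq⟩ := h.exists
  exact (ENNReal.ofReal_pos.2 (bivariateGaussianPDF_pos hρ q)).ne' hq

section WithDensity

variable {α : Type*} [MeasurableSpace α] {μ : Measure α}

lemma measureReal_withDensity_ofReal {f : α → ℝ} (hf : 0 ≤ f) (hfi : Integrable f μ)
    {E : Set α} (hE : MeasurableSet E) :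
    (μ.withDensity fun x => ENNReal.ofReal (f x)).real E = ∫ x in E, f x ∂μ := by
  rw [measureReal_def, withDensity_apply _ hE,
    ← ofReal_integral_eq_lintegral_ofReal hfi.integrableOn (.of_forall hf),
    ENNReal.toReal_ofReal (setIntegral_nonneg hE fun x _ => hf x)]

lemma abs_measureReal_withDensity_sub_le {f g : α → ℝ} (hf : 0 ≤ f) (hg : 0 ≤ g)
    (hfi : Integrable f μ) (hgi : Integrable g μ) {E : Set α} (hE : MeasurableSet E) :
    |(μ.withDensity fun x => ENNReal.ofReal (f x)).real E -
        (μ.withDensity fun x => ENNReal.ofReal (g x)).real E| ≤ ∫ x, |f x - g x| ∂μ := by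
  rw [measureReal_withDensity_ofReal hf hfi hE, measureReal_withDensity_ofReal hg hgi hE,
    ← integral_sub hfi.integrableOn hgi.integrableOn]
  calc |∫ x in E, f x - g x ∂μ|
      ≤ ∫ x in E, |f x - g x| ∂μ := abs_integral_le_integral_abs
    _ ≤ ∫ x, |f x - g x| ∂μ :=
      setIntegral_le_integral (hfi.sub hgi).abs (.of_forall fun _ => abs_nonneg _)

end WithDensity

lemma abs_measureReal_bivariateGaussian_sub_le {ρ : ℝ} (hρ : |ρ| ≤ 1 / 4)
    {E : Set (ℝ × ℝ)} (hE : MeasurableSet E) :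
    |(volume.withDensity fun q => ENNReal.ofReal (bivariateGaussianPDF ρ q)).real E -
        ((gaussianReal 0 1).prod (gaussianReal 0 1)).real E| ≤ 15 * |ρ| := by
  rw [gaussianReal_prod_gaussianReal]
  have hρ1 : ρ ^ 2 < 1 := (sq_lt_one_iff_abs_lt_one ρ).2 (by linarith)
  exact (abs_measureReal_withDensity_sub_le (fun q => (bivariateGaussianPDF_pos hρ1 q).le)
    (fun q => (bivariateGaussianPDF_pos (by simp) q).le) (integrable_bivariateGaussianPDF hρ)
    (integrable_bivariateGaussianPDF (by simp)) hE).trans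
    (integral_abs_bivariateGaussianPDF_sub_le hρ)

lemma abs_measureReal_prod_sub_mul_le {α β : Type*} [MeasurableSpace α] [MeasurableSpace β]
    {μ : Measure (α × β)} [IsProbabilityMeasure μ] (ν₁ : Measure α) (ν₂ : Measure β)
    [IsProbabilityMeasure ν₁] [IsProbabilityMeasure ν₂] {δ : ℝ}
    (hδ : ∀ E, MeasurableSet E → |μ.real E - (ν₁.prod ν₂).real E| ≤ δ)
    {A : Set α} {B : Set β} (hA : MeasurableSet A) (hB : MeasurableSet B) :
    |μ.real (A ×ˢ B) - μ.real (A ×ˢ .univ) * μ.real (.univ ×ˢ B)| ≤ 3 * δ := by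
  have hAB := hδ _ (hA.prod hB)
  have hA' := hδ _ (hA.prod .univ)
  have hB' := hδ _ (MeasurableSet.univ.prod hB)
  simp only [measureReal_prod_prod, probReal_univ, mul_one, one_mul] at hAB hA' hB'
  set a := μ.real (A ×ˢ .univ)
  set b := μ.real (.univ ×ˢ B)
  set a' := ν₁.real A
  set b' := ν₂.real B
  have hb : |(a - a') * b| ≤ δ := by
    rw [abs_mul, abs_of_nonneg measureReal_nonneg]
    exact (mul_le_of_le_one_right (abs_nonneg _) measureReal_le_one).trans hA'
  have ha' : |a' * (b - b')| ≤ δ := by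
    rw [abs_mul, abs_of_nonneg measureReal_nonneg]
    exact (mul_le_of_le_one_left (abs_nonneg _) measureReal_le_one).trans hB'
  calc |μ.real (A ×ˢ B) - a * b|
      = |(μ.real (A ×ˢ B) - a' * b') - (a - a') * b - a' * (b - b')| := by ring_nf
    _ ≤ |μ.real (A ×ˢ B) - a' * b'| + |(a - a') * b| + |a' * (b - b')| :=
      (abs_sub _ _).trans (by gcongr; exact abs_sub _ _)
    _ ≤ 3 * δ := by linarith

lemma integral_indicator_one_comp_eq_measureReal_map {Ω α : Type*} [MeasurableSpace Ω]
    [MeasurableSpace α] {P : Measure Ω} {X : Ω → α} (hX : AEMeasurable X P) {E : Set α}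
    (hE : MeasurableSet E) :
    ∫ ω, E.indicator 1 (X ω) ∂P = (P.map X).real E := by
  rw [← integral_indicator_one hE, integral_map hX (by fun_prop)]

lemma abs_measureReal_sub_gaussianReal_prod_le {μ : Measure (ℝ × ℝ)} [IsProbabilityMeasure μ]
    {ρ : ℝ} (hμ : μ = volume.withDensity fun q => ENNReal.ofReal (bivariateGaussianPDF ρ q))
    {E : Set (ℝ × ℝ)} (hE : MeasurableSet E) :
    |μ.real E - ((gaussianReal 0 1).prod (gaussianReal 0 1)).real E| ≤ 15 * |ρ| := by
  rcases le_or_gt |ρ| (1 / 4) with hsmall | hlarge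
  · rw [hμ]; exact abs_measureReal_bivariateGaussian_sub_le hsmall hE
  · refine (abs_sub_le_iff.2 ⟨?_, ?_⟩).trans (by linarith : (1 : ℝ) ≤ 15 * |ρ|) <;>
      linarith [measureReal_nonneg (μ := μ) (s := E), measureReal_le_one (μ := μ) (s := E),
        measureReal_nonneg (μ := (gaussianReal 0 1).prod (gaussianReal 0 1)) (s := E),
        measureReal_le_one (μ := (gaussianReal 0 1).prod (gaussianReal 0 1)) (s := E)]

/-- there is a universal constant `C > 0` such that for every centered
bivariate normal vector `(X, Y)` with unit variances and correlation `ρ ∈ (−1, 1)`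
(i.e. with joint density `f_ρ`) and every `t > 0`,
`|Cov(1{|X| ≤ t}, 1{|Y| ≤ t})| ≤ C |ρ|`. -/
theorem stmt16 :
    ∃ C : ℝ, 0 < C ∧
    ∀ (Ω : Type) [MeasureSpace Ω] [IsProbabilityMeasure (ℙ : Measure Ω)]
      (u v : Ω → ℝ) (ρ t : ℝ), ρ ∈ Set.Ioo (-1 : ℝ) 1 → 0 < t →
      Measure.map (fun ω => (u ω, v ω)) ℙ =
        (volume : Measure (ℝ × ℝ)).withDensity
          (fun q => ENNReal.ofReal
            ((2 * π * Real.sqrt (1 - ρ ^ 2))⁻¹ *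
              Real.exp (-(q.1 ^ 2 + q.2 ^ 2 - 2 * ρ * q.1 * q.2) / (2 * (1 - ρ ^ 2))))) →
      |(∫ ω, (if |u ω| ≤ t then (1 : ℝ) else 0) * (if |v ω| ≤ t then (1 : ℝ) else 0)
          ∂(ℙ : Measure Ω)) -
        (∫ ω, (if |u ω| ≤ t then (1 : ℝ) else 0) ∂(ℙ : Measure Ω)) *
        (∫ ω, (if |v ω| ≤ t then (1 : ℝ) else 0) ∂(ℙ : Measure Ω))| ≤ C * |ρ| := by
  refine ⟨45, by norm_num, fun Ω _ _ u v ρ t hρ _ hmap => ?_⟩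
  have hX : AEMeasurable (fun ω => (u ω, v ω)) ℙ := by
    refine .of_map_ne_zero ?_
    rw [hmap]
    exact withDensity_bivariateGaussianPDF_ne_zero ((sq_lt_one_iff_abs_lt_one ρ).2 (abs_lt.2 hρ))
  set μ := Measure.map (fun ω => (u ω, v ω)) ℙ
  have hμ : μ = volume.withDensity fun q => ENNReal.ofReal (bivariateGaussianPDF ρ q) := hmap
  have : IsProbabilityMeasure μ := Measure.isProbabilityMeasure_map hX
  set S := {x : ℝ | |x| ≤ t}
  have hS : MeasurableSet S := measurableSet_le measurable_abs measurable_const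
  have hindS : ∀ x, S.indicator 1 x = if |x| ≤ t then (1 : ℝ) else 0 := fun x => by
    simp [Set.indicator_apply, S]
  have hSS := integral_indicator_one_comp_eq_measureReal_map hX (hS.prod hS)
  have hSU := integral_indicator_one_comp_eq_measureReal_map hX (hS.prod .univ)
  have hUS := integral_indicator_one_comp_eq_measureReal_map hX (MeasurableSet.univ.prod hS)
  simp only [Set.indicator_prod_one, Set.indicator_univ, Pi.one_apply, mul_one, one_mul,
    hindS] at hSS hSU hUS
  rw [hSS, hSU, hUS]
  linarith [abs_measureReal_prod_sub_mul_le _ _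
    (fun E hE => abs_measureReal_sub_gaussianReal_prod_le hμ hE) hS hS]
end
end

section
/- Let (w₁, …, w_p) be a centered jointly Gaussian vector in which every coordinate has unit variance (arbitrary correlation structure), with p large enough that C_p = ln(p²/2π) + ln ln(p²/2π) is well defined and nonnegative. Then for every x ≥ 0, Pr(max_{1≤j≤p} w_j² > C_p + 2x) ≤ e^{−x}; equivalently, max_{1≤j≤p} w_j² is stochastically dominated by C_p + 2𝒢 where 𝒢 is a standard exponential random variable. -/
open Real MeasureTheory ProbabilityTheory
open scoped ProbabilityTheory

noncomputable section

/-- `u` is a (possibly degenerate) centered Gaussian vector with covariance matrix `C`: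
every linear functional of `u` has the corresponding one-dimensional centered Gaussian
law. -/
def IsCenteredGaussianVec {Ω : Type*} [MeasureSpace Ω] {ι : Type*} [Fintype ι]
    (u : Ω → ι → ℝ) (C : Matrix ι ι ℝ) : Prop :=
  ∀ a : ι → ℝ,
    Measure.map (fun ω => ∑ i, a i * u ω i) ℙ =
      gaussianReal 0 (Real.toNNReal (∑ i, ∑ j, a i * C i j * a j))

/- ### Auxiliary lemmas -/

lemma integral_Ioi_shift (f : ℝ → ℝ) (t : ℝ) :
    ∫ x in Set.Ioi t, f x = ∫ u in Set.Ioi (0:ℝ), f (u + t) := by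
  rw [← integral_indicator measurableSet_Ioi, ← integral_indicator measurableSet_Ioi,
      ← integral_add_right_eq_self (fun x => Set.indicator (Set.Ioi t) f x) t]
  congr 1; ext u
  by_cases h : 0 < u
  · rw [Set.indicator_of_mem (by simpa using h), Set.indicator_of_mem (by simpa using h)]
  · rw [Set.indicator_of_notMem (by simpa using h), Set.indicator_of_notMem (by simpa using h)]

lemma integrable_core {t : ℝ} (ht : 0 < t) :
    IntegrableOn (fun u => Real.exp (-(t*u) - u^2/2)) (Set.Ioi (0:ℝ)) := by
  apply Integrable.mono (exp_neg_integrableOn_Ioi 0 ht)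
  · apply Continuous.aestronglyMeasurable; continuity
  · filter_upwards [ae_restrict_mem measurableSet_Ioi] with u hu
    simp only [norm_eq_abs, abs_exp]
    apply Real.exp_le_exp.2
    have : (0:ℝ) ≤ u := le_of_lt hu
    nlinarith

lemma integrable_f1 {t : ℝ} (ht : 0 < t) :
    IntegrableOn (fun u => Real.exp (-(2*t*u))) (Set.Ioi (0:ℝ)) := by
  have := exp_neg_integrableOn_Ioi 0 (show (0:ℝ) < 2*t by linarith)
  apply this.congr_fun _ measurableSet_Ioi
  intro u _; ring_nf

lemma integral_f1 {t : ℝ} (ht : 0 < t) :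
    ∫ u in Set.Ioi (0:ℝ), Real.exp (-(2*t*u)) = 1/(2*t) := by
  have h := integral_comp_mul_left_Ioi (fun y => Real.exp (-y)) 0 (b := 2*t) (by linarith)
  simp only [mul_zero, smul_eq_mul] at h
  have h2 : ∫ u in Set.Ioi (0:ℝ), Real.exp (-(2*t*u))
      = (2*t)⁻¹ * ∫ x in Set.Ioi (0:ℝ), Real.exp (-x) := by
    rw [← h]
  rw [h2, integral_exp_neg_Ioi_zero]; ring

lemma core_bound {t : ℝ} (ht : 0 < t) :
    ∫ u in Set.Ioi (0:ℝ), Real.exp (-(t*u) - u^2/2) ≤ Real.sqrt (Real.sqrt π / t) / 2 := by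
  have hπ : (0:ℝ) < Real.sqrt π := Real.sqrt_pos.2 Real.pi_pos
  set r : ℝ := Real.sqrt (Real.sqrt π / t) with hr_def
  have hr : 0 < r := Real.sqrt_pos.2 (by positivity)
  have hr2 : r^2 = Real.sqrt π / t := Real.sq_sqrt (by positivity)
  set s : ℝ := r * t with hs_def
  have hs : 0 < s := by positivity
  have hs2 : s^2 = Real.sqrt π * t := by
    rw [hs_def, mul_pow, hr2]; field_simp
  -- pointwise bound
  have hpt : ∀ u ∈ Set.Ioi (0:ℝ), Real.exp (-(t*u) - u^2/2)
      ≤ (s * Real.exp (-(2*t*u)) + s⁻¹ * Real.exp (-u^2)) / 2 := by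
    intro u _
    set a := Real.exp (-(t*u)) with ha
    set b := Real.exp (-(u^2/2)) with hb
    have hab : Real.exp (-(t*u) - u^2/2) = a * b := by rw [ha, hb, ← Real.exp_add]; ring_nf
    have ha2 : Real.exp (-(2*t*u)) = a^2 := by rw [ha, ← Real.exp_nat_mul]; ring_nf
    have hb2 : Real.exp (-u^2) = b^2 := by rw [hb, ← Real.exp_nat_mul]; ring_nf
    rw [hab, ha2, hb2]
    have hinv : s * s⁻¹ = 1 := mul_inv_cancel₀ hs.ne'
    nlinarith [sq_nonneg (s*a - b), hs, sq_nonneg a, sq_nonneg b]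
  have hint2 : IntegrableOn (fun u => (s * Real.exp (-(2*t*u)) + s⁻¹ * Real.exp (-u^2)) / 2)
      (Set.Ioi (0:ℝ)) := by
    apply Integrable.div_const
    apply Integrable.add
    · exact (integrable_f1 ht).const_mul _
    · exact (((integrable_exp_neg_mul_sq one_pos).integrableOn).congr_fun
        (fun u _ => by norm_num) measurableSet_Ioi).const_mul _
  calc ∫ u in Set.Ioi (0:ℝ), Real.exp (-(t*u) - u^2/2)
      ≤ ∫ u in Set.Ioi (0:ℝ), (s * Real.exp (-(2*t*u)) + s⁻¹ * Real.exp (-u^2)) / 2 :=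
        setIntegral_mono_on (integrable_core ht) hint2 measurableSet_Ioi hpt
    _ = (s * (1/(2*t)) + s⁻¹ * (Real.sqrt π / 2)) / 2 := by
        rw [integral_div]
        rw [integral_add ((integrable_f1 ht).const_mul _)
          ((((integrable_exp_neg_mul_sq one_pos).integrableOn).congr_fun
            (fun u _ => by norm_num) measurableSet_Ioi).const_mul _)]
        rw [MeasureTheory.integral_const_mul, MeasureTheory.integral_const_mul, integral_f1 ht]
        have hg : ∫ a in Set.Ioi (0:ℝ), rexp (-a^2) = Real.sqrt π/2 := by
          simpa using integral_gaussian_Ioi 1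
        rw [hg]
    _ = r / 2 := by
        rw [hs_def]
        have h1 : r * t * (1/(2*t)) = r/2 := by field_simp
        have h2 : (r*t)⁻¹ * (Real.sqrt π / 2) = r/2 := by
          rw [show Real.sqrt π = r^2 * t by rw [hr2]; field_simp]
          field_simp
        rw [h1, h2]; ring

lemma exp_taylor_ub {y : ℝ} (h0 : 0 ≤ y) (h1 : y ≤ 1) :
    Real.exp y ≤ 1 + y + y^2/2 + y^3/6 + y^4/24 + y^5/100 := by
  have h := Real.exp_bound' h0 h1 (n := 5) (by norm_num)
  norm_num [Finset.sum_range_succ, Nat.factorial] at h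
  nlinarith [pow_nonneg h0 5]

lemma num1 : Real.exp 1.3795 ≤ 25 / (2*π) := by
  have h1 : Real.exp (1.3795:ℝ) = Real.exp 1 * Real.exp 0.3795 := by
    rw [← Real.exp_add]; norm_num
  have h2 := Real.exp_one_lt_d9
  have h3 : Real.exp (0.3795:ℝ) ≤ 1.4616 :=
    le_trans (exp_taylor_ub (y := 0.3795) (by norm_num) (by norm_num)) (by norm_num)
  have hπ : π < 3.141593 := by
    have := Real.pi_lt_d6; linarith
  have hπ0 := Real.pi_pos
  rw [le_div_iff₀ (by positivity)]
  have he : Real.exp (1.3795:ℝ) ≤ 2.7182818286 * 1.4616 := by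
    rw [h1]; exact mul_le_mul h2.le h3 (Real.exp_pos _).le (by norm_num)
  nlinarith [Real.exp_pos (1.3795:ℝ)]

lemma num2 : Real.exp 0.3205 ≤ 1.3795 :=
  le_trans (exp_taylor_ub (y := 0.3205) (by norm_num) (by norm_num)) (by norm_num)

lemma gauss_tail {c : ℝ} (hc : 0 < c) :
    (gaussianReal 0 1) {y : ℝ | c < y^2} ≤
      ENNReal.ofReal ((Real.sqrt (2*π))⁻¹ *
        (Real.exp (-(c/2)) * Real.sqrt (Real.sqrt π / Real.sqrt c))) := by
  set t := Real.sqrt c with ht_def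
  have ht : 0 < t := Real.sqrt_pos.2 hc
  have ht2 : t^2 = c := Real.sq_sqrt hc.le
  have hset : {y : ℝ | c < y^2} = Set.Iio (-t) ∪ Set.Ioi t := by
    ext y
    simp only [Set.mem_setOf_eq, Set.mem_union, Set.mem_Iio, Set.mem_Ioi]
    constructor
    · intro h
      rcases le_or_gt y 0 with hy | hy
      · left; nlinarith
      · right; nlinarith
    · rintro (h | h) <;> nlinarith
  have hpdf : ∀ y : ℝ, gaussianPDFReal 0 1 y = (Real.sqrt (2*π))⁻¹ * Real.exp (-(y^2/2)) := by
    intro y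
    rw [gaussianPDFReal]
    norm_num
    left; ring
  set f : ℝ → ℝ := fun y => (Real.sqrt (2*π))⁻¹ * Real.exp (-(y^2/2)) with hf_def
  have hf_int : Integrable f := by
    have h0 : f = fun y => (Real.sqrt (2*π))⁻¹ * Real.exp (-(1/2:ℝ) * y^2) := by
      funext y; rw [hf_def]; ring_nf
    rw [h0]
    exact (integrable_exp_neg_mul_sq (by norm_num : (0:ℝ) < 1/2)).const_mul _
  rw [gaussianReal_apply_eq_integral 0 one_ne_zero]
  apply ENNReal.ofReal_le_ofReal
  have hcong : ∫ y in {y : ℝ | c < y^2}, gaussianPDFReal 0 1 y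
      = ∫ y in {y : ℝ | c < y^2}, f y := by
    apply setIntegral_congr_fun
    · exact measurableSet_lt measurable_const (measurable_id.pow_const 2)
    · intro y _; exact hpdf y
  rw [hcong, hset, setIntegral_union (by
      apply Set.disjoint_left.2
      intro y hy1 hy2
      simp only [Set.mem_Iio, Set.mem_Ioi] at hy1 hy2
      linarith) measurableSet_Ioi hf_int.integrableOn hf_int.integrableOn]
  have hsym : ∫ y in Set.Iio (-t), f y = ∫ y in Set.Ioi t, f y := by
    rw [← integral_Iic_eq_integral_Iio, ← integral_comp_neg_Ioi]
    congr 1; funext y; rw [hf_def]; ring_nf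
  rw [hsym]
  have hIoi : ∫ y in Set.Ioi t, f y
      = (Real.sqrt (2*π))⁻¹ * (Real.exp (-(c/2))
          * ∫ u in Set.Ioi (0:ℝ), Real.exp (-(t*u) - u^2/2)) := by
    rw [hf_def]
    simp only
    rw [integral_Ioi_shift (fun y => (Real.sqrt (2*π))⁻¹ * Real.exp (-(y^2/2))) t]
    have hptw : ∀ u : ℝ, (Real.sqrt (2*π))⁻¹ * Real.exp (-((u+t)^2/2))
        = (Real.sqrt (2*π))⁻¹ * (Real.exp (-(c/2)) * Real.exp (-(t*u) - u^2/2)) := by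
      intro u
      rw [← Real.exp_add, ← ht2]
      ring_nf
    simp_rw [hptw]
    rw [MeasureTheory.integral_const_mul, MeasureTheory.integral_const_mul]
  rw [hIoi]
  have hb := core_bound ht
  have h1 : (0:ℝ) < Real.sqrt (2*π) := Real.sqrt_pos.2 (by positivity)
  have h2 : (0:ℝ) < Real.exp (-(c/2)) := Real.exp_pos _
  calc (Real.sqrt (2*π))⁻¹ * (Real.exp (-(c/2)) * ∫ u in Set.Ioi (0:ℝ), Real.exp (-(t*u) - u^2/2))
      + (Real.sqrt (2*π))⁻¹ * (Real.exp (-(c/2)) * ∫ u in Set.Ioi (0:ℝ), Real.exp (-(t*u) - u^2/2))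
      ≤ (Real.sqrt (2*π))⁻¹ * (Real.exp (-(c/2)) * (Real.sqrt (Real.sqrt π / t)/2))
      + (Real.sqrt (2*π))⁻¹ * (Real.exp (-(c/2)) * (Real.sqrt (Real.sqrt π / t)/2)) := by
        have := mul_le_mul_of_nonneg_left (mul_le_mul_of_nonneg_left hb h2.le) (inv_nonneg.2 h1.le)
        linarith
    _ = (Real.sqrt (2*π))⁻¹ * (Real.exp (-(c/2)) * Real.sqrt (Real.sqrt π / t)) := by ring

/-- if `(w₁, …, w_p)` is a centered jointly Gaussian vector with unit
variances (arbitrary correlation structure) and `p` is large enough that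
`C_p = ln(p²/2π) + ln ln(p²/2π)` is well defined and nonnegative, then for every `x ≥ 0`,
`Pr(max_j w_j² > C_p + 2x) ≤ e^{−x}` (i.e. `max_j w_j²` is stochastically dominated by
`C_p + 2𝒢` with `𝒢` standard exponential). -/
theorem stmt18 :
    ∀ (p : ℕ) (Ω : Type) [MeasureSpace Ω] [IsProbabilityMeasure (ℙ : Measure Ω)]
      (w : Ω → Fin p → ℝ) (K : Matrix (Fin p) (Fin p) ℝ),
      IsCenteredGaussianVec w K → (∀ j, K j j = 1) →
      1 ≤ Real.log ((p : ℝ) ^ 2 / (2 * π)) →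
      ∀ x : ℝ, 0 ≤ x →
        (ℙ : Measure Ω) {ω | ∃ j,
            Real.log ((p : ℝ) ^ 2 / (2 * π)) +
              Real.log (Real.log ((p : ℝ) ^ 2 / (2 * π))) + 2 * x < (w ω j) ^ 2} ≤
          ENNReal.ofReal (Real.exp (-x)) := by
  intro p Ω _ _ w K hG hK hL x hx
  have hπ := Real.pi_pos
  set L := Real.log ((p : ℝ) ^ 2 / (2 * π)) with hLdef
  set c := L + Real.log L + 2 * x with hcdef
  -- p is positive
  have hp0 : p ≠ 0 := by
    rintro rfl
    rw [hLdef] at hL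
    norm_num [Real.log_zero] at hL
  have hppos : (0:ℝ) < (p:ℝ) := by positivity
  have hratio_pos : (0:ℝ) < (p:ℝ)^2/(2*π) := by positivity
  have hexpL : Real.exp L = (p:ℝ)^2/(2*π) := Real.exp_log hratio_pos
  -- p ≥ 5
  have hp5 : (5:ℝ) ≤ (p:ℝ) := by
    have h1 : Real.exp 1 ≤ (p:ℝ)^2/(2*π) := by
      rw [← hexpL]; exact Real.exp_le_exp.2 hL
    have he := Real.exp_one_gt_d9
    have hπlb := Real.pi_gt_d6
    have h1' : Real.exp 1 * (2*π) ≤ (p:ℝ)^2 := by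
      rw [← le_div_iff₀ (by positivity)]
      exact h1
    have hsq : (16:ℝ) < (p:ℝ)^2 := by nlinarith [Real.exp_pos 1]
    have h4 : (4:ℝ) < (p:ℝ) := by nlinarith
    have : 4 < p := by exact_mod_cast h4
    exact_mod_cast this
  -- numeric lower bounds for L and log L
  have hLlb : (1.3795:ℝ) ≤ L := by
    have h25 : (25:ℝ)/(2*π) ≤ (p:ℝ)^2/(2*π) := by
      apply div_le_div_of_nonneg_right ?_ (by positivity)
      · nlinarith
    have hlog1 : Real.log ((25:ℝ)/(2*π)) ≤ L := by
      rw [hLdef]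
      exact Real.log_le_log (by positivity) h25
    have hlog2 : (1.3795:ℝ) ≤ Real.log ((25:ℝ)/(2*π)) :=
      (Real.le_log_iff_exp_le (by positivity)).2 num1
    linarith
  have hLpos : (0:ℝ) < L := by linarith
  have hlogLlb : (0.3205:ℝ) ≤ Real.log L := by
    apply (Real.le_log_iff_exp_le hLpos).2
    exact le_trans num2 hLlb
  have hc17 : (1.7:ℝ) ≤ c := by rw [hcdef]; linarith
  have hc_pos : (0:ℝ) < c := by linarith
  -- coordinate laws
  have hlaw : ∀ j : Fin p, Measure.map (fun ω => w ω j) ℙ = gaussianReal 0 1 := by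
    intro j
    have h := hG (fun i => if i = j then 1 else 0)
    have e1 : (fun ω => ∑ i, (if i = j then (1:ℝ) else 0) * w ω i) = fun ω => w ω j := by
      funext ω
      simp [ite_mul, Finset.sum_ite_eq']
    have e2 : ∑ i, ∑ k, (if i = j then (1:ℝ) else 0) * K i k * (if k = j then (1:ℝ) else 0)
        = 1 := by
      simp [ite_mul, mul_ite, Finset.sum_ite_eq', Finset.sum_ite_eq, hK j]
    rw [e1, e2, Real.toNNReal_one] at h
    exact h
  have hmeas : ∀ j : Fin p, AEMeasurable (fun ω => w ω j) ℙ := by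
    intro j
    by_contra hm
    have h := hlaw j
    rw [Measure.map_of_not_aemeasurable hm] at h
    have h0 := congrArg (fun μ : Measure ℝ => μ Set.univ) h
    simp [measure_univ] at h0
  -- measurable target set
  have hT : MeasurableSet {y : ℝ | c < y^2} :=
    measurableSet_lt measurable_const (measurable_id.pow_const 2)
  -- rewrite event as a union
  have hsetEq : {ω | ∃ j, c < (w ω j)^2}
      = ⋃ j : Fin p, (fun ω => w ω j) ⁻¹' {y : ℝ | c < y^2} := by
    ext ω
    simp [Set.mem_iUnion, Set.mem_preimage, Set.mem_setOf_eq]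
  -- per coordinate bound
  set q : ℝ := (Real.sqrt (2*π))⁻¹ *
    (Real.exp (-(c/2)) * Real.sqrt (Real.sqrt π / Real.sqrt c)) with hq_def
  have hper : ∀ j : Fin p, (ℙ : Measure Ω) ((fun ω => w ω j) ⁻¹' {y : ℝ | c < y^2})
      ≤ ENNReal.ofReal q := by
    intro j
    have := Measure.map_apply_of_aemeasurable (hmeas j) hT
    rw [← this, hlaw j]
    exact gauss_tail hc_pos
  -- final real arithmetic
  have hfinal : (p:ℝ) * q ≤ Real.exp (-x) := by
    set t := Real.sqrt c with ht_def
    have ht : 0 < t := Real.sqrt_pos.2 hc_pos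
    have h2π : (0:ℝ) < Real.sqrt (2*π) := Real.sqrt_pos.2 (by positivity)
    have hsL : (0:ℝ) < Real.sqrt L := Real.sqrt_pos.2 hLpos
    have hsplit : Real.exp (-(c/2))
        = Real.exp (-x) * Real.exp (-(L/2)) * Real.exp (-(Real.log L / 2)) := by
      rw [← Real.exp_add, ← Real.exp_add]
      congr 1
      rw [hcdef]; ring
    have heL : Real.exp (-(L/2)) = Real.sqrt (2*π) / (p:ℝ) := by
      rw [Real.exp_neg, Real.exp_half, hexpL, Real.sqrt_div (by positivity) _,
        Real.sqrt_sq hppos.le, inv_div]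
    have helogL : Real.exp (-(Real.log L/2)) = (Real.sqrt L)⁻¹ := by
      rw [Real.exp_neg, Real.exp_half, Real.exp_log hLpos]
    have hπle : Real.sqrt π ≤ t * L := by
      have h17 : Real.sqrt 1.7 ≤ t := Real.sqrt_le_sqrt hc17
      have hm : Real.sqrt π ≤ Real.sqrt 1.7 * 1.3795 := by
        rw [show (1.3795:ℝ) = Real.sqrt (1.3795^2) from (Real.sqrt_sq (by norm_num)).symm,
          ← Real.sqrt_mul (by norm_num)]
        apply Real.sqrt_le_sqrt
        nlinarith [Real.pi_lt_d6]
      calc Real.sqrt π ≤ Real.sqrt 1.7 * 1.3795 := hm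
        _ ≤ t * L := mul_le_mul h17 hLlb (by norm_num) ht.le
    have hkey : Real.sqrt (Real.sqrt π / t) ≤ Real.sqrt L := by
      apply Real.sqrt_le_sqrt
      rw [div_le_iff₀ ht]
      calc Real.sqrt π ≤ t * L := hπle
        _ = L * t := mul_comm _ _
    have hq : (p:ℝ) * q = Real.exp (-x) * ((Real.sqrt L)⁻¹ * Real.sqrt (Real.sqrt π / t)) := by
      rw [hq_def, hsplit, heL, helogL]
      field_simp
    rw [hq]
    have hle1 : (Real.sqrt L)⁻¹ * Real.sqrt (Real.sqrt π / t) ≤ 1 := by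
      rw [inv_mul_le_iff₀ hsL]
      simpa using hkey
    calc Real.exp (-x) * ((Real.sqrt L)⁻¹ * Real.sqrt (Real.sqrt π / t))
        ≤ Real.exp (-x) * 1 := mul_le_mul_of_nonneg_left hle1 (Real.exp_pos _).le
      _ = Real.exp (-x) := mul_one _
  calc (ℙ : Measure Ω) {ω | ∃ j, c < (w ω j)^2}
      ≤ ∑' j : Fin p, (ℙ : Measure Ω) ((fun ω => w ω j) ⁻¹' {y : ℝ | c < y^2}) := by
        rw [hsetEq]; exact measure_iUnion_le _
    _ = ∑ j : Fin p, (ℙ : Measure Ω) ((fun ω => w ω j) ⁻¹' {y : ℝ | c < y^2}) :=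
        tsum_fintype _
    _ ≤ (Finset.univ : Finset (Fin p)).sum (fun _ => ENNReal.ofReal q) :=
        Finset.sum_le_sum (fun j _ => hper j)
    _ = (p : ENNReal) * ENNReal.ofReal q := by
        rw [Finset.sum_const, Finset.card_univ, Fintype.card_fin, nsmul_eq_mul]
    _ = ENNReal.ofReal ((p:ℝ) * q) := by
        rw [← ENNReal.ofReal_natCast p]
        exact (ENNReal.ofReal_mul (by positivity)).symm
    _ ≤ ENNReal.ofReal (Real.exp (-x)) := ENNReal.ofReal_le_ofReal hfinal
end
end
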